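/- For every n ≥ 2 and every subset A of L, the following are equivalent: (i) the space (X, τ(A)) is normal; (ii) the subset L is C*-embedded in (X, τ(A)); (iii) the subset L is z-embedded in (X, τ(A)). -/

import Mathlib

open Metric Set TopologicalSpace

noncomputable section

/-- The last coordinate `x (n-1)` of a point of `EuclideanSpace ℝ (Fin n)`
(junk value `0` if `n = 0`). -/
def lastCoord (n : ℕ) (x : EuclideanSpace ℝ (Fin n)) : ℝ :=
  if h : 0 < n then x ⟨n - 1, Nat.sub_lt h one_pos⟩ else 0

/-- The closed upper half-space `X = {x : x (n-1) ≥ 0}`. -/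
def HalfSpace (n : ℕ) : Set (EuclideanSpace ℝ (Fin n)) := {x | 0 ≤ lastCoord n x}

/-- The open upper half-space `P = {x : x (n-1) > 0}`. -/
def OpenHalf (n : ℕ) : Set (EuclideanSpace ℝ (Fin n)) := {x | 0 < lastCoord n x}

/-- The boundary hyperplane `L = {x : x (n-1) = 0}`. -/
def Bdry (n : ℕ) : Set (EuclideanSpace ℝ (Fin n)) := {x | lastCoord n x = 0}

/-- The `n`-th standard basis vector `e` (junk value `0` if `n = 0`). -/
def eVec (n : ℕ) : EuclideanSpace ℝ (Fin n) :=
  if h : 0 < n then EuclideanSpace.single ⟨n - 1, Nat.sub_lt h one_pos⟩ (1 : ℝ) else 0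

/-- The tangent ball `B̃(a, ε) = {a} ∪ B(a + ε • e, ε)`. -/
def tangentBall (n : ℕ) (a : EuclideanSpace ℝ (Fin n)) (ε : ℝ) :
    Set (EuclideanSpace ℝ (Fin n)) :=
  {a} ∪ ball (a + ε • eVec n) ε

/-- The generating family for the topology `τ(A)` on `X`:
balls `B(a,ε)` with `a ∈ P`, `0 < ε < a (n-1)`; traces `B(a,ε) ∩ X` with `a ∈ A`, `ε > 0`;
and tangent balls `B̃(a,ε)` with `a ∈ L \ A`, `ε > 0`. -/
def niemGen (n : ℕ) (A : Set (EuclideanSpace ℝ (Fin n))) : Set (Set (HalfSpace n)) :=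
  {s | ∃ a ∈ OpenHalf n, ∃ ε, 0 < ε ∧ ε < lastCoord n a ∧
      s = Subtype.val ⁻¹' ball a ε} ∪
  {s | ∃ a ∈ A, ∃ ε, 0 < ε ∧ s = Subtype.val ⁻¹' ball a ε} ∪
  {s | ∃ a ∈ Bdry n \ A, ∃ ε, 0 < ε ∧ s = Subtype.val ⁻¹' tangentBall n a ε}

/-- The topology `τ(A)` on `X`; `τ(∅)` is the Niemytzki topology `τ_N`. -/
def tau (n : ℕ) (A : Set (EuclideanSpace ℝ (Fin n))) : TopologicalSpace (HalfSpace n) :=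
  generateFrom (niemGen n A)

/-- The inclusion of `L` into `X`. -/
def inclLX (n : ℕ) (x : Bdry n) : HalfSpace n := ⟨x.1, le_of_eq x.2.symm⟩

/-- The subspace topology `τ(A)|_L` on `L` induced from `(X, τ(A))`. -/
def tauL (n : ℕ) (A : Set (EuclideanSpace ℝ (Fin n))) : TopologicalSpace (Bdry n) :=
  TopologicalSpace.induced (inclLX n) (tau n A)

/-- A space is perfect if every closed set is a `Gδ`-set. -/
def IsPerfectSpace (X : Type*) [TopologicalSpace X] : Prop :=
  ∀ s : Set X, IsClosed s → IsGδ s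

/-- An `Fσ`-set: a countable union of closed sets. -/
def IsFsigma {X : Type*} [TopologicalSpace X] (s : Set X) : Prop :=
  ∃ F : ℕ → Set X, (∀ i, IsClosed (F i)) ∧ s = ⋃ i, F i

/-- Countably paracompact: every countable open cover admits a locally finite open refinement. -/
def CountablyParacompact (X : Type*) [TopologicalSpace X] : Prop :=
  ∀ u : ℕ → Set X, (∀ i, IsOpen (u i)) → (⋃ i, u i) = Set.univ →
    ∃ (ι : Type) (v : ι → Set X), (∀ j, IsOpen (v j)) ∧ (⋃ j, v j) = Set.univ ∧
      LocallyFinite v ∧ ∀ j, ∃ i, v j ⊆ u i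

/-- A zero set: the zero locus of a continuous real-valued function. -/
def IsZeroSet {X : Type*} [TopologicalSpace X] (s : Set X) : Prop :=
  ∃ f : X → ℝ, Continuous f ∧ s = f ⁻¹' {0}

/-- `Y` is z-embedded in `X` if every zero set of the subspace `Y`
is the trace on `Y` of a zero set of `X`. -/
def ZEmbedded {X : Type*} [TopologicalSpace X] (Y : Set X) : Prop :=
  ∀ s : Set Y, IsZeroSet s → ∃ Z : Set X, IsZeroSet Z ∧ s = Subtype.val ⁻¹' Z

/-- `Y` is `C*`-embedded in `X` if every bounded continuous real-valued function on the
subspace `Y` extends to a bounded continuous function on `X`. -/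
def CStarEmbedded {X : Type*} [TopologicalSpace X] (Y : Set X) : Prop :=
  ∀ f : Y → ℝ, Continuous f → (∃ M, ∀ y, |f y| ≤ M) →
    ∃ g : X → ℝ, Continuous g ∧ (∃ M, ∀ x, |g x| ≤ M) ∧ ∀ y : Y, g ↑y = f y
end

/-!
(i) ⇒ (ii) is Tietze's theorem, `L` being closed, and (ii) ⇒ (iii) holds in every space.

(iii) ⇒ (ii): `L` is the zero set of the last coordinate. For a z-embedded zero set, disjoint
zero sets of `L` are traces of disjoint zero sets of `X`, so completely separated subsets of `L`
stay completely separated in `X`; that is all the successive-approximation proof of Tietze's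
theorem needs (Urysohn's extension theorem).

(ii) ⇒ (i): the points of `L \ A` are isolated in `L` and the others have Euclidean
neighbourhoods, so `L` is normal. Disjoint closed `F`, `G ⊆ X` are therefore separated on `L` by
a Urysohn function, which extends to some `g` on `X`; near `L` they are separated by
`{g < 1/2}` and `{g > 1/2}`, in the open half-space by small Euclidean balls. The two pieces fit
together because `B̃(a, 2ε)` contains the Euclidean ball of radius `z_n / 2` about every point
`z` of `B̃(a, ε)`: hence a boundary point off `G` is not in the closure of the balls about `G`.
-/

open Filter Topology BoundedContinuousFunction
open scoped ENNReal

section Embedding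

variable {W : Type*} [TopologicalSpace W] {Y : Set W}

theorem CStarEmbedded.of_forall_exists_domRestrict_eq
    (h : ∀ f : Y →ᵇ ℝ, ∃ g : W →ᵇ ℝ, g.domRestrict Y = f) : CStarEmbedded Y := by
  rintro f hf ⟨M, hM⟩
  obtain ⟨g, hg⟩ := h (ofNormedAddCommGroup f hf M hM)
  exact ⟨g, g.continuous, ⟨‖g‖, g.norm_coe_le_norm⟩, fun y => congr($hg y)⟩

theorem IsClosed.cstarEmbedded [NormalSpace W] (hY : IsClosed Y) : CStarEmbedded Y :=
  .of_forall_exists_domRestrict_eq fun f =>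
    (exists_norm_eq_domRestrict_eq_of_closed f hY).imp fun _ hg => hg.2

theorem CStarEmbedded.zEmbedded (hY : CStarEmbedded Y) : ZEmbedded Y := by
  rintro s ⟨h, hh, rfl⟩
  obtain ⟨g, hg, -, hgh⟩ := hY (fun y => min |h y| 1) (hh.abs.min continuous_const)
    ⟨1, fun y => by rw [abs_of_nonneg (by positivity)]; exact min_le_right _ _⟩
  refine ⟨g ⁻¹' {0}, ⟨g, hg, rfl⟩, ?_⟩
  ext y
  simp only [mem_preimage, mem_singleton_iff, hgh]
  constructor
  · intro hy
    simp [hy]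
  · intro hy
    rcases min_eq_iff.1 hy with ⟨h1, -⟩ | ⟨h1, -⟩
    · exact abs_eq_zero.1 h1
    · exact absurd h1 one_ne_zero

theorem isZeroSet_setOf_le {f g : W → ℝ} (hf : Continuous f) (hg : Continuous g) :
    IsZeroSet {x | f x ≤ g x} :=
  ⟨fun x => max (f x - g x) 0, (hf.sub hg).max continuous_const, by ext x; simp⟩

/-- Equivalent to the usual definition (`f = 0` on `s`, `f = 1` on `t`) after clamping `f`
to `[0, 1]`. -/
def CompletelySeparated (s t : Set W) : Prop :=
  ∃ f : W → ℝ, Continuous f ∧ (∀ x ∈ s, f x ≤ 0) ∧ ∀ x ∈ t, 1 ≤ f x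

theorem CompletelySeparated.mono {s t s' t' : Set W} (h : CompletelySeparated s t)
    (hs : s' ⊆ s) (ht : t' ⊆ t) : CompletelySeparated s' t' :=
  h.imp fun _ ⟨hf, h0, h1⟩ => ⟨hf, fun x hx => h0 x (hs hx), fun x hx => h1 x (ht hx)⟩

theorem completelySeparated_zeroSets {p q : W → ℝ} (hp : Continuous p) (hq : Continuous q)
    (hpq : ∀ x, p x = 0 → q x ≠ 0) : CompletelySeparated (p ⁻¹' {0}) (q ⁻¹' {0}) := by
  have hden (x : W) : |p x| + |q x| ≠ 0 := by
    rw [Ne, add_eq_zero_iff_of_nonneg (abs_nonneg _) (abs_nonneg _), abs_eq_zero, abs_eq_zero]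
    exact fun h => hpq x h.1 h.2
  refine ⟨fun x => |p x| / (|p x| + |q x|), hp.abs.div (hp.abs.add hq.abs) hden, ?_, ?_⟩
  · intro x (hx : p x = 0)
    simp [hx]
  · intro x (hx : q x = 0)
    have hpx : |p x| ≠ 0 := by simpa [hx] using hden x
    simp [hx, hpx]

theorem ZEmbedded.completelySeparated_image {l : W → ℝ} (hl : Continuous l)
    (hYl : Y = l ⁻¹' {0}) (hY : ZEmbedded Y) {s t : Set Y} (hst : CompletelySeparated s t) :
    CompletelySeparated (Subtype.val '' s) (Subtype.val '' t) := by
  obtain ⟨f, hf, hs, ht⟩ := hst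
  obtain ⟨-, ⟨w₁, hw₁, rfl⟩, h₁⟩ := hY _ (isZeroSet_setOf_le hf continuous_const)
  obtain ⟨-, ⟨w₂, hw₂, rfl⟩, h₂⟩ := hY _ (isZeroSet_setOf_le continuous_const hf)
  have h₁ (y : Y) : f y ≤ 0 ↔ w₁ y = 0 := Set.ext_iff.1 h₁ y
  have h₂ (y : Y) : 1 ≤ f y ↔ w₂ y = 0 := Set.ext_iff.1 h₂ y
  -- `w₁` and `w₂` have no common zero on `Y = {l = 0}`, so the zero sets
  -- `{w₁ = 0, |l| ≤ |w₂|}` and `{w₂ = 0, |l| ≤ |w₁|}` of `W` are disjoint.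
  refine (completelySeparated_zeroSets (p := fun x => |w₁ x| + max (|l x| - |w₂ x|) 0)
    (q := fun x => |w₂ x| + max (|l x| - |w₁ x|) 0) (by fun_prop) (by fun_prop) ?_).mono ?_ ?_
  · intro x hp hq
    have hw₁ := abs_nonneg (w₁ x)
    have hw₂ := abs_nonneg (w₂ x)
    have hm₁ := le_max_left (|l x| - |w₂ x|) 0
    have hm₂ := le_max_right (|l x| - |w₂ x|) 0
    have hm₃ := le_max_right (|l x| - |w₁ x|) 0
    have hx₁ : w₁ x = 0 := abs_eq_zero.1 (by linarith)
    have hx₂ : w₂ x = 0 := abs_eq_zero.1 (by linarith)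
    have hxY : x ∈ Y := hYl ▸ abs_eq_zero.1 (by linarith [abs_nonneg (l x)])
    linarith [(h₁ ⟨x, hxY⟩).2 hx₁, (h₂ ⟨x, hxY⟩).2 hx₂]
  · rintro _ ⟨y, hy, rfl⟩
    have hly : l y = 0 := hYl ▸ y.2
    simp [(h₁ y).1 (hs y hy), hly]
  · rintro _ ⟨y, hy, rfl⟩
    have hly : l y = 0 := hYl ▸ y.2
    simp [(h₂ y).1 (ht y hy), hly]

end Embedding

section Extension

variable {W : Type*} [TopologicalSpace W] {Y : Set W}

@[simp]
theorem BoundedContinuousFunction.zero_domRestrict : (0 : W →ᵇ ℝ).domRestrict Y = 0 := rfl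

theorem exists_domRestrict_eq_of_approx
    (step : ∀ f : Y →ᵇ ℝ, ∃ g : W →ᵇ ℝ, ‖g‖ ≤ ‖f‖ / 3 ∧ dist (g.domRestrict Y) f ≤ 2 / 3 * ‖f‖)
    (f : Y →ᵇ ℝ) : ∃ g : W →ᵇ ℝ, g.domRestrict Y = f := by
  choose F hF_norm hF_dist using step
  set g : ℕ → W →ᵇ ℝ := fun k => (fun g => g + F (f - g.domRestrict Y))^[k] 0
  have g_succ (k : ℕ) : g (k + 1) = g k + F (f - (g k).domRestrict Y) :=
    Function.iterate_succ_apply' _ _ _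
  have hgf (k : ℕ) : dist ((g k).domRestrict Y) f ≤ (2 / 3) ^ k * ‖f‖ := by
    induction k with
    | zero => simp [g, dist_eq_norm']
    | succ k ih =>
      calc dist ((g (k + 1)).domRestrict Y) f
          = dist ((F (f - (g k).domRestrict Y)).domRestrict Y) (f - (g k).domRestrict Y) := by
            rw [g_succ, dist_eq_norm, dist_eq_norm]; congr 1; ext; simp; ring
        _ ≤ 2 / 3 * ‖f - (g k).domRestrict Y‖ := hF_dist _
        _ ≤ (2 / 3) ^ (k + 1) * ‖f‖ := by
            rw [← dist_eq_norm', pow_succ', mul_assoc]; gcongr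
  have hg_dist (k : ℕ) : dist (g k) (g (k + 1)) ≤ ‖f‖ / 3 * (2 / 3) ^ k := by
    rw [g_succ, dist_self_add_right]
    calc ‖F (f - (g k).domRestrict Y)‖ ≤ dist ((g k).domRestrict Y) f / 3 := by
          rw [dist_eq_norm']; exact hF_norm _
      _ ≤ ‖f‖ / 3 * (2 / 3) ^ k := by linarith [hgf k]
  have hg_cau : CauchySeq g := cauchySeq_of_le_geometric _ _ (by norm_num) hg_dist
  obtain ⟨g', hg'⟩ := cauchySeq_tendsto_of_complete hg_cau
  refine ⟨g', tendsto_nhds_unique (((continuous_compContinuous _).tendsto g').comp hg') ?_⟩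
  refine tendsto_iff_dist_tendsto_zero.2 (squeeze_zero (fun _ => dist_nonneg) hgf ?_)
  simpa using (tendsto_pow_atTop_nhds_zero_of_lt_one (by norm_num : (0 : ℝ) ≤ 2 / 3)
    (by norm_num)).mul_const ‖f‖

theorem exists_approx_of_completelySeparated
    (h : ∀ s t : Set Y, CompletelySeparated s t →
      CompletelySeparated (Subtype.val '' s) (Subtype.val '' t)) (f : Y →ᵇ ℝ) :
    ∃ g : W →ᵇ ℝ, ‖g‖ ≤ ‖f‖ / 3 ∧ dist (g.domRestrict Y) f ≤ 2 / 3 * ‖f‖ := by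
  rcases eq_or_ne f 0 with rfl | hf
  · exact ⟨0, by simp⟩
  set c := ‖f‖
  have hc : 0 < c := norm_pos_iff.2 hf
  obtain ⟨u, hu, hu₀, hu₁⟩ := h {y | f y ≤ -c / 3} {y | c / 3 ≤ f y}
    ⟨fun y => 3 / (2 * c) * f y + 1 / 2, by fun_prop,
      fun y (hy : f y ≤ -c / 3) => by field_simp; linarith,
      fun y (hy : c / 3 ≤ f y) => by field_simp; linarith⟩
  set v : W → ℝ := fun x => c / 3 * (2 * max 0 (min 1 (u x)) - 1)
  have hv (x : W) : |v x| ≤ c / 3 := by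
    have h₀ := le_max_left 0 (min 1 (u x))
    have h₁ := max_le zero_le_one (min_le_left 1 (u x))
    calc |v x| = c / 3 * |2 * max 0 (min 1 (u x)) - 1| := by
          rw [abs_mul, abs_of_pos (by positivity)]
      _ ≤ c / 3 := mul_le_of_le_one_right (by positivity) (abs_le.2 ⟨by linarith, by linarith⟩)
  refine ⟨ofNormedAddCommGroup v (by fun_prop) (c / 3) hv,
    norm_ofNormedAddCommGroup_le _ (by positivity) _, (dist_le (by positivity)).2 fun y => ?_⟩
  have hfy : |f y| ≤ c := by simpa using f.norm_coe_le_norm y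
  rw [abs_le] at hfy
  change |v y - f y| ≤ 2 / 3 * c
  rcases le_or_gt (f y) (-c / 3) with h₁ | h₁
  · have : v y = -c / 3 := by
      simp only [v, min_eq_right (hu₀ _ ⟨y, h₁, rfl⟩ |>.trans zero_le_one),
        max_eq_left (hu₀ _ ⟨y, h₁, rfl⟩)]; ring
    rw [this, abs_le]; constructor <;> linarith
  rcases le_or_gt (c / 3) (f y) with h₂ | h₂
  · have : v y = c / 3 := by
      simp only [v, min_eq_left (hu₁ _ ⟨y, h₂, rfl⟩)]; norm_num
    rw [this, abs_le]; constructor <;> linarith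
  · have := abs_le.1 (hv y)
    rw [abs_le]; constructor <;> linarith

/-- Urysohn's extension theorem. -/
theorem CStarEmbedded.of_completelySeparated
    (h : ∀ s t : Set Y, CompletelySeparated s t →
      CompletelySeparated (Subtype.val '' s) (Subtype.val '' t)) : CStarEmbedded Y :=
  .of_forall_exists_domRestrict_eq <|
    exists_domRestrict_eq_of_approx (exists_approx_of_completelySeparated h)

end Extension

section Separation

variable {W E : Type*} [PseudoEMetricSpace E] (φ : W → E)

/-- `x` is inserted so that a point of radius zero still lies in its own piece. -/
def ballUnion (r : W → ℝ≥0∞) (s : Set W) : Set W :=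
  ⋃ x ∈ s, insert x (φ ⁻¹' Metric.eball (φ x) (r x))

variable {φ} {r r' : W → ℝ≥0∞} {s t : Set W}

theorem subset_ballUnion : s ⊆ ballUnion φ r s :=
  fun x hx => mem_biUnion hx (mem_insert x _)

theorem disjoint_ballUnion (hst : Disjoint s t)
    (hr : ∀ x ∈ s, r x ≤ Metric.infEDist (φ x) (φ '' t) / 2)
    (hr' : ∀ y ∈ t, r' y ≤ Metric.infEDist (φ y) (φ '' s) / 2) :
    Disjoint (ballUnion φ r s) (ballUnion φ r' t) := by
  have key : ∀ x ∈ s, ∀ y ∈ t, r x + r' y ≤ edist (φ x) (φ y) := fun x hx y hy =>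
    calc r x + r' y ≤ edist (φ x) (φ y) / 2 + edist (φ y) (φ x) / 2 := by
          gcongr
          · exact (hr x hx).trans (by gcongr; exact Metric.infEDist_le_edist_of_mem ⟨y, hy, rfl⟩)
          · exact (hr' y hy).trans (by gcongr; exact Metric.infEDist_le_edist_of_mem ⟨x, hx, rfl⟩)
      _ = edist (φ x) (φ y) := by rw [edist_comm (φ y), ENNReal.add_halves]
  simp only [ballUnion, disjoint_iUnion_left, disjoint_iUnion_right]
  intro y hy x hx
  rw [Set.disjoint_left]
  rintro z (rfl | hzx) (rfl | hzy)
  · exact disjoint_left.1 hst hx hy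
  · exact (key z hx y hy).not_gt ((Metric.mem_eball.1 hzy).trans_le le_add_self)
  · rw [mem_preimage, Metric.mem_eball, edist_comm] at hzx
    exact (key x hx z hy).not_gt (hzx.trans_le le_self_add)
  · rw [mem_preimage, Metric.mem_eball'] at hzx
    exact (key x hx y hy).not_gt ((edist_triangle _ (φ z) _).trans_lt
      (ENNReal.add_lt_add hzx (Metric.mem_eball.1 hzy)))

variable [TopologicalSpace W]

theorem isOpen_ballUnion (hφ : Continuous φ) (hr : ∀ x ∈ s, 0 < r x ∨ IsOpen {x}) :
    IsOpen (ballUnion φ r s) := by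
  refine isOpen_biUnion fun x hx => ?_
  have hball : IsOpen (φ ⁻¹' Metric.eball (φ x) (r x)) := Metric.isOpen_eball.preimage hφ
  rcases hr x hx with hrx | hx
  · rwa [insert_eq_of_mem (mem_preimage.2 (Metric.mem_eball_self hrx))]
  · exact hx.union hball

theorem infEDist_image_pos {x : W} (hx : 𝓝 x = comap φ (𝓝 (φ x))) (ht : IsClosed t)
    (hxt : x ∉ t) : 0 < Metric.infEDist (φ x) (φ '' t) := by
  rw [pos_iff_ne_zero, Ne, ← Metric.mem_closure_iff_infEDist_zero, mem_closure_iff_nhds]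
  obtain ⟨U, hU, hUt⟩ := (hx ▸ ht.isOpen_compl.mem_nhds hxt : tᶜ ∈ comap φ (𝓝 (φ x)))
  intro h
  obtain ⟨_, hzU, z, hz, rfl⟩ := h U hU
  exact hUt hzU hz

theorem separatedNhds_of_union_diff_closure {F G U V U' V' : Set W} (hU : IsOpen U)
    (hV : IsOpen V) (hUV : Disjoint U V) (hU' : IsOpen U') (hV' : IsOpen V')
    (hUV' : Disjoint U' V') (hF : F ⊆ U ∪ U' \ closure V) (hG : G ⊆ V ∪ V' \ closure U) :
    SeparatedNhds F G := by
  refine ⟨_, _, hU.union (hU'.sdiff isClosed_closure), hV.union (hV'.sdiff isClosed_closure),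
    hF, hG, ?_⟩
  have hU_V' : Disjoint U (V' \ closure U) :=
    (disjoint_sdiff_right : Disjoint (closure U) _).mono_left subset_closure
  have hU'_V : Disjoint (U' \ closure V) V :=
    (disjoint_sdiff_left : Disjoint _ (closure V)).mono_right subset_closure
  simp only [disjoint_union_left, disjoint_union_right]
  exact ⟨⟨hUV, hU'_V⟩, hU_V', hUV'.mono sdiff_subset sdiff_subset⟩

end Separation

section Geometry

open RealInnerProductSpace

variable {n : ℕ}

theorem lastCoord_eq_inner (x : EuclideanSpace ℝ (Fin n)) : lastCoord n x = ⟪x, eVec n⟫ := by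
  unfold lastCoord eVec
  split_ifs
  · simp [EuclideanSpace.inner_single_right]
  · simp

theorem norm_eVec (hn : 0 < n) : ‖eVec n‖ = 1 := by
  simp [eVec, hn]

theorem lastCoord_sub (x y : EuclideanSpace ℝ (Fin n)) :
    lastCoord n (x - y) = lastCoord n x - lastCoord n y := by
  simp only [lastCoord_eq_inner, inner_sub_left]

theorem abs_lastCoord_le_norm (x : EuclideanSpace ℝ (Fin n)) : |lastCoord n x| ≤ ‖x‖ := by
  rw [lastCoord_eq_inner]
  refine (abs_real_inner_le_norm _ _).trans (mul_le_of_le_one_right (norm_nonneg _) ?_)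
  unfold eVec
  split_ifs <;> simp

theorem abs_lastCoord_sub_le_dist (x y : EuclideanSpace ℝ (Fin n)) :
    |lastCoord n x - lastCoord n y| ≤ dist x y := by
  rw [← lastCoord_sub, dist_eq_norm]
  exact abs_lastCoord_le_norm _

theorem continuous_lastCoord : Continuous (lastCoord n) := by
  simp only [funext lastCoord_eq_inner]
  fun_prop

theorem dist_add_smul_eVec_sq (hn : 0 < n) (x a : EuclideanSpace ℝ (Fin n)) (ε : ℝ) :
    dist x (a + ε • eVec n) ^ 2 = ‖x - a‖ ^ 2 - 2 * ε * lastCoord n (x - a) + ε ^ 2 := by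
  rw [dist_eq_norm, sub_add_eq_sub_sub, norm_sub_sq_real, norm_smul, inner_smul_right,
    ← lastCoord_eq_inner, norm_eVec hn, Real.norm_eq_abs, mul_one, sq_abs]
  ring

end Geometry

section TangentBall

variable {n : ℕ} {a x : EuclideanSpace ℝ (Fin n)} {δ ε : ℝ}

theorem mem_ball_add_smul_eVec_iff (hn : 0 < n) (ha : lastCoord n a = 0) (hε : 0 ≤ ε) :
    x ∈ ball (a + ε • eVec n) ε ↔ ‖x - a‖ ^ 2 < 2 * ε * lastCoord n x := by
  rw [mem_ball, ← pow_lt_pow_iff_left₀ dist_nonneg hε two_ne_zero, dist_add_smul_eVec_sq hn,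
    lastCoord_sub, ha, sub_zero]
  constructor <;> intro <;> linarith

theorem lastCoord_le_norm_sub (ha : lastCoord n a = 0) (x : EuclideanSpace ℝ (Fin n)) :
    lastCoord n x ≤ ‖x - a‖ := by
  simpa [lastCoord_sub, ha] using (le_abs_self _).trans (abs_lastCoord_le_norm (x - a))

theorem lastCoord_pos_and_norm_sub_lt (hn : 0 < n) (ha : lastCoord n a = 0)
    (hx : x ∈ ball (a + ε • eVec n) ε) : 0 < lastCoord n x ∧ ‖x - a‖ < 2 * ε := by
  have hε : 0 < ε := pos_of_mem_ball hx
  have h := (mem_ball_add_smul_eVec_iff hn ha hε.le).1 hx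
  have hxa := lastCoord_le_norm_sub ha x
  constructor
  · nlinarith [sq_nonneg ‖x - a‖]
  · nlinarith [norm_nonneg (x - a)]

theorem tangentBall_mono (hn : 0 < n) (ha : lastCoord n a = 0) (hδε : δ ≤ ε) :
    tangentBall n a δ ⊆ tangentBall n a ε := by
  rintro x (hx | hx)
  · exact Or.inl hx
  have hδ : 0 < δ := pos_of_mem_ball hx
  have hxn := (lastCoord_pos_and_norm_sub_lt hn ha hx).1
  rw [mem_ball_add_smul_eVec_iff hn ha hδ.le] at hx
  exact Or.inr ((mem_ball_add_smul_eVec_iff hn ha (hδ.le.trans hδε)).2 (by nlinarith))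

theorem tangentBall_subset_ball (hn : 0 < n) (ha : lastCoord n a = 0) (hε : 0 < ε) :
    tangentBall n a ε ⊆ ball a (2 * ε) := by
  rintro x (rfl | hx)
  · exact mem_ball_self (by positivity)
  · rw [mem_ball, dist_eq_norm]
    exact (lastCoord_pos_and_norm_sub_lt hn ha hx).2

theorem eq_of_mem_tangentBall (hn : 0 < n) (ha : lastCoord n a = 0) (hx : lastCoord n x = 0)
    (h : x ∈ tangentBall n a ε) : x = a := by
  rcases h with h | h
  · exact h
  · exact absurd hx (lastCoord_pos_and_norm_sub_lt hn ha h).1.ne'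

theorem ball_subset_tangentBall_two_mul (hn : 0 < n) (ha : lastCoord n a = 0)
    (hx : x ∈ tangentBall n a ε) : ball x (lastCoord n x / 2) ⊆ tangentBall n a (2 * ε) := by
  rcases hx with rfl | hx
  · simp [ha]
  obtain ⟨hxn, hxa⟩ := lastCoord_pos_and_norm_sub_lt hn ha hx
  have hε : 0 < ε := pos_of_mem_ball hx
  have h := (mem_ball_add_smul_eVec_iff hn ha hε.le).1 hx
  have hxa' := lastCoord_le_norm_sub ha x
  -- `dist(x, a + 2εe)² = ‖x - a‖² - 4ε x_n + 4ε² < 4ε² - 2ε x_n ≤ (2ε - x_n / 2)²`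
  have hdist : dist x (a + (2 * ε) • eVec n) < 2 * ε - lastCoord n x / 2 := by
    rw [← pow_lt_pow_iff_left₀ dist_nonneg (by linarith) two_ne_zero, dist_add_smul_eVec_sq hn,
      lastCoord_sub, ha, sub_zero]
    nlinarith
  exact (ball_subset_ball' (by linarith)).trans (subset_union_right (s := {a}))

end TangentBall

section Topology

variable {n : ℕ} {A : Set (EuclideanSpace ℝ (Fin n))} {x : HalfSpace n} {δ ε : ℝ}

open scoped Classical in
def tauBall (A : Set (EuclideanSpace ℝ (Fin n))) (x : HalfSpace n) (δ : ℝ) : Set (HalfSpace n) :=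
  Subtype.val ⁻¹' if x.1 ∈ Bdry n \ A then tangentBall n x.1 δ else ball x.1 δ

theorem tauBall_of_mem (hx : x.1 ∈ Bdry n \ A) :
    tauBall A x δ = Subtype.val ⁻¹' tangentBall n x.1 δ := by
  simp [tauBall, hx]

theorem tauBall_of_notMem (hx : x.1 ∉ Bdry n \ A) :
    tauBall A x δ = Subtype.val ⁻¹' ball x.1 δ := by
  simp only [tauBall, if_neg hx]

theorem mem_tauBall_self (hδ : 0 < δ) : x ∈ tauBall A x δ := by
  by_cases hx : x.1 ∈ Bdry n \ A
  · rw [tauBall_of_mem hx]; exact Or.inl rfl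
  · rw [tauBall_of_notMem hx]; exact mem_ball_self hδ

theorem tauBall_mono (hn : 0 < n) (h : δ ≤ ε) : tauBall A x δ ⊆ tauBall A x ε := by
  by_cases hx : x.1 ∈ Bdry n \ A
  · simp only [tauBall_of_mem hx]
    exact preimage_mono (tangentBall_mono hn hx.1 h)
  · simp only [tauBall_of_notMem hx]
    exact preimage_mono (ball_subset_ball h)

theorem tauBall_subset_ball (hn : 0 < n) (hδ : 0 < δ) :
    tauBall A x δ ⊆ Subtype.val ⁻¹' ball x.1 (2 * δ) := by
  by_cases hx : x.1 ∈ Bdry n \ A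
  · rw [tauBall_of_mem hx]
    exact preimage_mono (tangentBall_subset_ball hn hx.1 hδ)
  · rw [tauBall_of_notMem hx]
    exact preimage_mono (ball_subset_ball (by linarith))

theorem exists_tauBall_mem_niemGen (hδ : 0 < δ) :
    ∃ δ' ∈ Ioc 0 δ, tauBall A x δ' ∈ niemGen n A := by
  by_cases hxL : x.1 ∈ Bdry n \ A
  · exact ⟨δ, ⟨hδ, le_rfl⟩, Or.inr ⟨x.1, hxL, δ, hδ, tauBall_of_mem hxL⟩⟩
  by_cases hxA : x.1 ∈ A
  · exact ⟨δ, ⟨hδ, le_rfl⟩, Or.inl (Or.inr ⟨x.1, hxA, δ, hδ, tauBall_of_notMem hxL⟩)⟩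
  have hxP : 0 < lastCoord n x.1 :=
    x.2.lt_of_ne fun h => hxL ⟨(h.symm : x.1 ∈ Bdry n), hxA⟩
  refine ⟨min δ (lastCoord n x.1 / 2), ⟨by positivity, min_le_left _ _⟩,
    Or.inl (Or.inl ⟨x.1, hxP, _, by positivity, ?_, tauBall_of_notMem hxL⟩)⟩
  exact (min_le_right _ _).trans_lt (half_lt_self hxP)

theorem exists_tauBall_subset_of_mem_niemGen (hn : 0 < n) {g : Set (HalfSpace n)}
    (hg : g ∈ niemGen n A) (hx : x ∈ g) : ∃ δ > 0, tauBall A x δ ⊆ g := by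
  have of_ball {a : EuclideanSpace ℝ (Fin n)} {r : ℝ} (hxa : x.1 ∈ ball a r) :
      ∃ δ > 0, tauBall A x δ ⊆ Subtype.val ⁻¹' ball a r := by
    rw [mem_ball] at hxa
    refine ⟨(r - dist x.1 a) / 2, by linarith, (tauBall_subset_ball hn (by linarith)).trans ?_⟩
    exact preimage_mono (ball_subset_ball' (by linarith))
  rcases hg with (⟨a, -, ε, -, -, rfl⟩ | ⟨a, -, ε, -, rfl⟩) | ⟨a, haL, ε, hε, rfl⟩
  · exact of_ball hx
  · exact of_ball hx
  rcases hx with hxa | hx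
  · have hxa : x.1 = a := hxa
    exact ⟨ε, hε, by rw [tauBall_of_mem (hxa ▸ haL), hxa]⟩
  · have hxL : x.1 ∉ Bdry n \ A := fun h =>
      (lastCoord_pos_and_norm_sub_lt hn haL.1 hx).1.ne' h.1
    rw [mem_ball] at hx
    refine ⟨ε - dist x.1 (a + ε • eVec n), by linarith, ?_⟩
    rw [tauBall_of_notMem hxL]
    exact preimage_mono ((ball_subset_ball' (sub_add_cancel _ _).le).trans subset_union_right)

theorem isTopologicalBasis_niemGen (hn : 0 < n) :
    @IsTopologicalBasis _ (tau n A) (niemGen n A) := by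
  let := tau n A
  refine ⟨fun t₁ h₁ t₂ h₂ x hx => ?_, eq_univ_of_forall fun x => ?_, rfl⟩
  · obtain ⟨δ₁, hδ₁, hsub₁⟩ := exists_tauBall_subset_of_mem_niemGen hn h₁ hx.1
    obtain ⟨δ₂, hδ₂, hsub₂⟩ := exists_tauBall_subset_of_mem_niemGen hn h₂ hx.2
    obtain ⟨δ, ⟨hδ, hδle⟩, hmem⟩ := exists_tauBall_mem_niemGen (A := A) (x := x) (lt_min hδ₁ hδ₂)
    exact ⟨_, hmem, mem_tauBall_self hδ,
      subset_inter ((tauBall_mono hn (hδle.trans (min_le_left _ _))).trans hsub₁)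
        ((tauBall_mono hn (hδle.trans (min_le_right _ _))).trans hsub₂)⟩
  · obtain ⟨δ, ⟨hδ, -⟩, hmem⟩ := exists_tauBall_mem_niemGen (A := A) (x := x) one_pos
    exact ⟨_, hmem, mem_tauBall_self hδ⟩

theorem hasBasis_nhds_tauBall (hn : 0 < n) (x : HalfSpace n) :
    (@nhds _ (tau n A) x).HasBasis (0 < ·) (tauBall A x) := by
  let := tau n A
  refine ⟨fun s => ?_⟩
  rw [(isTopologicalBasis_niemGen hn).mem_nhds_iff]
  constructor
  · rintro ⟨t, ht, hxt, hts⟩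
    obtain ⟨δ, hδ, hsub⟩ := exists_tauBall_subset_of_mem_niemGen hn ht hxt
    exact ⟨δ, hδ, hsub.trans hts⟩
  · rintro ⟨δ, hδ, hsub⟩
    obtain ⟨δ', ⟨hδ', hδ'le⟩, hmem⟩ := exists_tauBall_mem_niemGen (A := A) (x := x) hδ
    exact ⟨_, hmem, mem_tauBall_self hδ', (tauBall_mono hn hδ'le).trans hsub⟩

theorem nhds_eq_comap_val (hn : 0 < n) (hx : x.1 ∉ Bdry n \ A) :
    @nhds _ (tau n A) x = comap Subtype.val (𝓝 x.1) :=
  (hasBasis_nhds_tauBall hn x).eq_of_same_basis <| by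
    rw [show tauBall A x = _ from funext fun _ => tauBall_of_notMem hx]
    exact nhds_basis_ball.comap Subtype.val

theorem continuous_val (hn : 0 < n) :
    Continuous[tau n A, _] (Subtype.val : HalfSpace n → EuclideanSpace ℝ (Fin n)) := by
  let := tau n A
  refine continuous_iff_continuousAt.2 fun x =>
    ((hasBasis_nhds_tauBall hn x).tendsto_iff nhds_basis_ball).2 fun ε hε => ?_
  refine ⟨ε / 2, half_pos hε, fun y hy => ?_⟩
  have := tauBall_subset_ball hn (half_pos hε) hy
  rwa [mul_div_cancel₀ _ two_ne_zero] at this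

abbrev bdryX (n : ℕ) : Set (HalfSpace n) := Subtype.val ⁻¹' Bdry n

theorem isClosed_bdryX (hn : 0 < n) : IsClosed[tau n A] (bdryX n) :=
  letI := tau n A
  isClosed_singleton.preimage (continuous_lastCoord.comp (continuous_val hn))

end Topology

section Boundary

variable {n : ℕ} {A : Set (EuclideanSpace ℝ (Fin n))}

theorem nhds_bdryX_eq_comap (hn : 0 < n) {y : bdryX n} (hy : y.1.1 ∈ A) :
    @nhds (bdryX n) (@instTopologicalSpaceSubtype _ _ (tau n A)) y =
      comap (fun z : bdryX n => z.1.1) (𝓝 y.1.1) := by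
  let := tau n A
  rw [nhds_induced, nhds_eq_comap_val hn fun h => h.2 hy, comap_comap]
  rfl

theorem isOpen_singleton_bdryX (hn : 0 < n) {y : bdryX n} (hy : y.1.1 ∉ A) :
    IsOpen[@instTopologicalSpaceSubtype _ _ (tau n A)] {y} := by
  let := tau n A
  refine isOpen_iff_mem_nhds.2 fun _ h => ?_
  rw [mem_singleton_iff.1 h, nhds_induced, mem_comap]
  refine ⟨_, (hasBasis_nhds_tauBall hn y.1).mem_of_mem one_pos, fun z hz => ?_⟩
  rw [mem_preimage, tauBall_of_mem ⟨y.2, hy⟩] at hz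
  exact Subtype.ext (Subtype.ext (eq_of_mem_tangentBall hn y.2 z.2 hz))

theorem normalSpace_bdryX (hn : 0 < n) :
    @NormalSpace (bdryX n) (@instTopologicalSpaceSubtype _ _ (tau n A)) := by
  let := tau n A
  let φ : bdryX n → EuclideanSpace ℝ (Fin n) := fun z => z.1.1
  have hφ : Continuous φ := (continuous_val hn).comp continuous_subtype_val
  have hopen {s t : Set (bdryX n)} (ht : IsClosed t) (hst : Disjoint s t) :
      IsOpen (ballUnion φ (fun y => Metric.infEDist (φ y) (φ '' t) / 2) s) := by
    refine isOpen_ballUnion hφ fun y hy => ?_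
    by_cases hyA : y.1.1 ∈ A
    · exact Or.inl (ENNReal.half_pos (infEDist_image_pos (nhds_bdryX_eq_comap hn hyA) ht
        (disjoint_left.1 hst hy)).ne')
    · exact Or.inr (isOpen_singleton_bdryX hn hyA)
  refine ⟨fun s t hs ht hst => ⟨_, _, hopen ht hst, hopen hs hst.symm, subset_ballUnion,
    subset_ballUnion, disjoint_ballUnion hst (fun _ _ => le_rfl) (fun _ _ => le_rfl)⟩⟩

end Boundary

section Normality

variable {n : ℕ} {A : Set (EuclideanSpace ℝ (Fin n))} {δ : ℝ}

theorem mem_tauBall_two_mul_of_dist_lt (hn : 0 < n) {x y z : HalfSpace n}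
    (hx : lastCoord n x.1 = 0) (hz : z ∈ tauBall A x δ)
    (hyz : dist y.1 z.1 < lastCoord n z.1 / 2) : y ∈ tauBall A x (2 * δ) := by
  by_cases hxL : x.1 ∈ Bdry n \ A
  · rw [tauBall_of_mem hxL] at hz ⊢
    exact ball_subset_tangentBall_two_mul hn hx hz (mem_ball.2 hyz)
  · rw [tauBall_of_notMem hxL] at hz ⊢
    rw [mem_preimage, mem_ball] at hz ⊢
    have hzn : lastCoord n z.1 ≤ dist z.1 x.1 := by
      simpa [hx] using (le_abs_self _).trans (abs_lastCoord_sub_le_dist z.1 x.1)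
    linarith [dist_triangle y.1 z.1 x.1, dist_nonneg (x := z.1) (y := x.1)]

theorem notMem_closure_of_forall_exists_dist_lt (hn : 0 < n) {G S : Set (HalfSpace n)}
    (hG : IsClosed[tau n A] G) {x : HalfSpace n} (hx : lastCoord n x.1 = 0) (hxG : x ∉ G)
    (hS : ∀ z ∈ S, ∃ c ∈ G, dist c.1 z.1 < lastCoord n z.1 / 2) : x ∉ closure[tau n A] S := by
  let := tau n A
  obtain ⟨δ, hδ, hsub⟩ := (hasBasis_nhds_tauBall hn x).mem_iff.1 (hG.isOpen_compl.mem_nhds hxG)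
  rw [mem_closure_iff_nhds]
  intro h
  obtain ⟨z, hz, hzS⟩ := h _ ((hasBasis_nhds_tauBall hn x).mem_of_mem (half_pos hδ))
  obtain ⟨c, hcG, hc⟩ := hS z hzS
  have := mem_tauBall_two_mul_of_dist_lt hn hx hz hc
  rw [mul_div_cancel₀ _ two_ne_zero] at this
  exact hsub this hcG

/-- The radii are at most `c_n / 4`, so that every point `z` lies within `z_n / 2` of `F`. -/
def openHalfNhd (F G : Set (HalfSpace n)) : Set (HalfSpace n) :=
  ballUnion Subtype.val (fun c => min (Metric.infEDist c.1 (Subtype.val '' G) / 2)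
    (ENNReal.ofReal (lastCoord n c.1 / 4))) (F ∩ {c | 0 < lastCoord n c.1})

theorem isOpen_openHalfNhd (hn : 0 < n) {F G : Set (HalfSpace n)} (hG : IsClosed[tau n A] G)
    (hFG : Disjoint F G) : IsOpen[tau n A] (openHalfNhd F G) := by
  let := tau n A
  refine isOpen_ballUnion (continuous_val hn) fun c ⟨hcF, hcP⟩ => Or.inl (lt_min ?_ ?_)
  · exact ENNReal.half_pos (infEDist_image_pos (nhds_eq_comap_val hn fun h => hcP.ne' h.1) hG
      (disjoint_left.1 hFG hcF)).ne'
  · exact ENNReal.ofReal_pos.2 (by linarith [show 0 < lastCoord n c.1 from hcP])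

theorem disjoint_openHalfNhd {F G : Set (HalfSpace n)} (hFG : Disjoint F G) :
    Disjoint (openHalfNhd F G) (openHalfNhd G F) := by
  refine disjoint_ballUnion (hFG.mono inter_subset_left inter_subset_left)
    (fun c _ => (min_le_left _ _).trans ?_) (fun c _ => (min_le_left _ _).trans ?_) <;>
  exact ENNReal.div_le_div_right (Metric.infEDist_anti (image_mono inter_subset_left)) _

theorem exists_dist_lt_of_mem_openHalfNhd {F G : Set (HalfSpace n)} {z : HalfSpace n}
    (hz : z ∈ openHalfNhd F G) : ∃ c ∈ F, dist c.1 z.1 < lastCoord n z.1 / 2 := by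
  simp only [openHalfNhd, ballUnion, mem_iUnion] at hz
  obtain ⟨c, ⟨hcF, hcP⟩, hzc⟩ := hz
  refine ⟨c, hcF, ?_⟩
  rcases hzc with rfl | hzc
  · simpa using half_pos (show 0 < lastCoord n z.1 from hcP)
  · rw [mem_preimage, Metric.mem_eball] at hzc
    have hzc := edist_lt_ofReal.1 (hzc.trans_le (min_le_right _ _))
    have hcz := abs_le.1 (abs_lastCoord_sub_le_dist c.1 z.1)
    rw [dist_comm] at hzc
    linarith

theorem subset_openHalfNhd_union (hn : 0 < n) {F G O : Set (HalfSpace n)}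
    (hG : IsClosed[tau n A] G) (hFG : Disjoint F G) (hO : ∀ x ∈ F, x.1 ∈ Bdry n → x ∈ O) :
    F ⊆ openHalfNhd F G ∪ O \ closure[tau n A] (openHalfNhd G F) := by
  intro x hx
  have hx₀ : 0 ≤ lastCoord n x.1 := x.2
  rcases hx₀.lt_or_eq with hxP | hxL
  · exact Or.inl (subset_ballUnion ⟨hx, hxP⟩)
  · exact Or.inr ⟨hO x hx hxL.symm, notMem_closure_of_forall_exists_dist_lt hn hG hxL.symm
      (disjoint_left.1 hFG hx) fun _ => exists_dist_lt_of_mem_openHalfNhd⟩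

theorem normalSpace_of_cstarEmbedded (hn : 0 < n) (hL : @CStarEmbedded _ (tau n A) (bdryX n)) :
    @NormalSpace _ (tau n A) := by
  let := tau n A
  have := normalSpace_bdryX (A := A) hn
  refine ⟨fun F G hF hG hFG => ?_⟩
  obtain ⟨f, hf₀, hf₁, hf⟩ := exists_continuous_zero_one_of_isClosed
    (hF.preimage continuous_subtype_val : IsClosed (Subtype.val ⁻¹' F : Set (bdryX n)))
    (hG.preimage continuous_subtype_val) (hFG.preimage _)
  obtain ⟨g, hg, -, hgf⟩ := hL f f.continuous
    ⟨1, fun y => abs_le.2 ⟨by linarith [(hf y).1], (hf y).2⟩⟩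
  refine separatedNhds_of_union_diff_closure (U' := g ⁻¹' Iio (1 / 2)) (V' := g ⁻¹' Ioi (1 / 2))
    (isOpen_openHalfNhd hn hG hFG) (isOpen_openHalfNhd hn hF hFG.symm) (disjoint_openHalfNhd hFG)
    (isOpen_Iio.preimage hg) (isOpen_Ioi.preimage hg) (Iio_disjoint_Ioi_same.preimage g)
    (subset_openHalfNhd_union hn hG hFG fun x hx hxL => ?_)
    (subset_openHalfNhd_union hn hF hFG.symm fun x hx hxL => ?_)
  · show g x < 1 / 2
    rw [hgf ⟨x, hxL⟩, hf₀ hx]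
    norm_num
  · show 1 / 2 < g x
    rw [hgf ⟨x, hxL⟩, hf₁ hx]
    norm_num

end Normality

theorem tauA_normal_tfae_general (n : ℕ) (hn : 2 ≤ n)
    (A : Set (EuclideanSpace ℝ (Fin n))) :
    [@NormalSpace (HalfSpace n) (tau n A),
     @CStarEmbedded (HalfSpace n) (tau n A) (Subtype.val ⁻¹' Bdry n),
     @ZEmbedded (HalfSpace n) (tau n A) (Subtype.val ⁻¹' Bdry n)].TFAE := by
  have hn₀ : 0 < n := by omega
  let := tau n A
  tfae_have 1 → 2 := fun _ => (isClosed_bdryX hn₀).cstarEmbedded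
  tfae_have 2 → 3 := CStarEmbedded.zEmbedded
  tfae_have 3 → 2 := fun hz => .of_completelySeparated fun _ _ =>
    hz.completelySeparated_image (continuous_lastCoord.comp (continuous_val hn₀)) rfl
  tfae_have 2 → 1 := normalSpace_of_cstarEmbedded hn₀
  tfae_finish

/-- For every `n ≥ 2` and `A ⊆ L`, the following are equivalent: (i) `(X, τ(A))` is normal;
(ii) `L` is `C*`-embedded in `(X, τ(A))`; (iii) `L` is z-embedded in `(X, τ(A))`. -/
theorem tauA_normal_tfae (n : ℕ) (hn : 2 ≤ n)
    (A : Set (EuclideanSpace ℝ (Fin n))) (hA : A ⊆ Bdry n) :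
    [@NormalSpace (HalfSpace n) (tau n A),
     @CStarEmbedded (HalfSpace n) (tau n A) (Subtype.val ⁻¹' Bdry n),
     @ZEmbedded (HalfSpace n) (tau n A) (Subtype.val ⁻¹' Bdry n)].TFAE :=
  tauA_normal_tfae_general n hn A
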